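/- Under the same hypotheses (A ∈ ℝ^{m×n}, strictly positive x, s ∈ ℝⁿ and w, r ∈ ℝᵐ, σμ > 0, and (Δx, Δw, Δs, Δr) solving the Newton system), the direction Δw satisfies the reduced system Q·Δw = b − A·x + σμ·D(w)⁻¹·𝟙 + A·D(s)⁻¹·D(x)·[c − Aᵀ·w − σμ·D(x)⁻¹·𝟙], where Q = A·D(s)⁻¹·D(x)·Aᵀ + D(w)⁻¹·D(r). -/
import Mathlib
open Matrix

theorem newton_system_reduced_deltaw (m n : ℕ) (A : Matrix (Fin m) (Fin n) ℝ)
    (b : Fin m → ℝ) (c : Fin n → ℝ)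
    (x s Δx Δs : Fin n → ℝ) (w r Δw Δr : Fin m → ℝ) (σ μ : ℝ)
    (hx : ∀ i, 0 < x i) (hs : ∀ i, 0 < s i)
    (hw : ∀ j, 0 < w j) (hr : ∀ j, 0 < r j)
    (hσμ : 0 < σ * μ)
    (h1 : A.mulVec Δx - Δr = b - A.mulVec x + r)
    (h2 : Aᵀ.mulVec Δw + Δs = c - Aᵀ.mulVec w - s)
    (h3 : (Matrix.diagonal s).mulVec Δx + (Matrix.diagonal x).mulVec Δs
        = (σ * μ) • (1 : Fin n → ℝ)
          - (Matrix.diagonal x * Matrix.diagonal s).mulVec (1 : Fin n → ℝ))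
    (h4 : (Matrix.diagonal r).mulVec Δw + (Matrix.diagonal w).mulVec Δr
        = (σ * μ) • (1 : Fin m → ℝ)
          - (Matrix.diagonal w * Matrix.diagonal r).mulVec (1 : Fin m → ℝ)) :
    (A * (Matrix.diagonal s)⁻¹ * Matrix.diagonal x * Aᵀ
      + (Matrix.diagonal w)⁻¹ * Matrix.diagonal r).mulVec Δw
      = b - A.mulVec x + (σ * μ) • (Matrix.diagonal w)⁻¹.mulVec (1 : Fin m → ℝ)
        + (A * (Matrix.diagonal s)⁻¹ * Matrix.diagonal x).mulVec
            (c - Aᵀ.mulVec w - (σ * μ) • (Matrix.diagonal x)⁻¹.mulVec (1 : Fin n → ℝ)) := by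
  have hsne : ∀ i, s i ≠ 0 := fun i => (hs i).ne'
  have hxne : ∀ i, x i ≠ 0 := fun i => (hx i).ne'
  have hwne : ∀ j, w j ≠ 0 := fun j => (hw j).ne'
  have hinv : ∀ (k : ℕ) (v : Fin k → ℝ), (∀ i, v i ≠ 0) →
      (Matrix.diagonal v)⁻¹ = Matrix.diagonal (fun i => (v i)⁻¹) := by
    intro k v hv
    refine Matrix.inv_eq_right_inv ?_
    rw [Matrix.diagonal_mul_diagonal,
      show (fun i => v i * (v i)⁻¹) = fun _ => (1:ℝ) from funext fun i => mul_inv_cancel₀ (hv i)]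
    exact Matrix.diagonal_one
  rw [hinv n s hsne, hinv n x hxne, hinv m w hwne]
  have h1' : ∀ j, A.mulVec Δx j - Δr j = b j - A.mulVec x j + r j := fun j => congrFun h1 j
  have h2' : ∀ i, Aᵀ.mulVec Δw i + Δs i = c i - Aᵀ.mulVec w i - s i := fun i => congrFun h2 i
  have h3' : ∀ i, s i * Δx i + x i * Δs i = σ * μ - x i * s i := by
    intro i
    have := congrFun h3 i
    simpa [Matrix.mulVec_diagonal, Matrix.diagonal_mul_diagonal] using this
  have h4' : ∀ j, r j * Δw j + w j * Δr j = σ * μ - w j * r j := by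
    intro j
    have := congrFun h4 j
    simpa [Matrix.mulVec_diagonal, Matrix.diagonal_mul_diagonal] using this
  ext j
  simp only [Matrix.add_mulVec, ← Matrix.mulVec_mulVec, Pi.add_apply, Pi.sub_apply,
    Pi.smul_apply, smul_eq_mul, Matrix.mulVec_diagonal]
  simp only [Matrix.mulVec, dotProduct, Matrix.mulVec_diagonal, Pi.sub_apply,
    Pi.smul_apply, smul_eq_mul, Pi.one_apply, Matrix.transpose_apply, mul_one,
    Matrix.diagonal_apply, mul_ite, ite_mul, mul_zero, zero_mul, Finset.sum_ite_eq,
    Finset.sum_ite_eq', Finset.mem_univ, if_true]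
  have hsum : ∀ i : Fin n, A j i * ((s i)⁻¹ * (x i * ∑ k : Fin m, A k i * Δw k))
      = A j i * ((s i)⁻¹ * (x i * (c i - (∑ k : Fin m, A k i * w k) - σ * μ * (x i)⁻¹)))
        + A j i * Δx i := by
    intro i
    have ht : (∑ k : Fin m, A k i * Δw k) = c i - (∑ k : Fin m, A k i * w k) - s i - Δs i := by
      have := h2' i
      simp only [Matrix.mulVec, dotProduct, Matrix.transpose_apply] at this
      linarith
    rw [ht]
    have h3i := h3' i
    have hxi := hxne i
    have hsi := hsne i
    field_simp
    linear_combination (-(A j i)) * h3i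
  rw [Finset.sum_congr rfl (fun i _ => hsum i), Finset.sum_add_distrib]
  have hT : (∑ i : Fin n, A j i * Δx i) = b j - (∑ i : Fin n, A j i * x i) + r j + Δr j := by
    have := h1' j
    simp only [Matrix.mulVec, dotProduct] at this
    linarith
  have hW : (w j)⁻¹ * (r j * Δw j) = σ * μ * (w j)⁻¹ - r j - Δr j := by
    have h4j := h4' j
    have hwj := hwne j
    field_simp
    linarith
  rw [hT, hW]
  ring
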